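/- arXiv:2211.14825 — 3 statements merged into one kernel-verified Lean document; each statement's English description precedes it below -/
import Mathlib

section
/- Let d, k be positive integers with k < d, let V = (V₁, …, V_d) have i.i.d. standard Gaussian N(0,1) entries, and let L = (V₁² + ⋯ + V_k²)/(V₁² + ⋯ + V_d²). Then for every real β with 0 < β < 1, Pr[L ≤ βk/d] ≤ β^{k/2} · (1 + (1−β)k/(d−k))^{(d−k)/2} ≤ exp((k/2)(1 − β + ln β)). -/
open MeasureTheory ProbabilityTheory Real
open scoped ENNReal

lemma lintegral_pi_prod : ∀ (n : ℕ) (f : Fin n → ℝ → ℝ≥0∞), (∀ i, Measurable (f i)) →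
    ∫⁻ x, ∏ i, f i (x i) ∂(Measure.pi fun _ : Fin n => gaussianReal 0 1)
      = ∏ i, ∫⁻ x, f i x ∂(gaussianReal 0 1) := by
  intro n
  induction n with
  | zero => intro f _; simp
  | succ n ih =>
    intro f hf
    have hmp := (measurePreserving_piFinSuccAbove (fun _ : Fin (n+1) => gaussianReal 0 1) 0)
    have he := (MeasurableEquiv.piFinSuccAbove (fun _ : Fin (n+1) => ℝ) 0).measurableEmbedding
    have key := hmp.lintegral_comp_emb he
      (fun z : ℝ × (Fin n → ℝ) => f 0 z.1 * ∏ i : Fin n, f i.succ (z.2 i))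
    have h1 : ∀ x : Fin (n+1) → ℝ, ∏ i, f i (x i)
        = f 0 (x 0) * ∏ i : Fin n, f i.succ (x i.succ) := fun x => Fin.prod_univ_succ _
    calc ∫⁻ x, ∏ i, f i (x i) ∂(Measure.pi fun _ : Fin (n+1) => gaussianReal 0 1)
        = ∫⁻ x, f 0 (x 0) * ∏ i : Fin n, f i.succ (x i.succ)
            ∂(Measure.pi fun _ : Fin (n+1) => gaussianReal 0 1) := by simp_rw [h1]
      _ = ∫⁻ z : ℝ × (Fin n → ℝ), f 0 z.1 * ∏ i : Fin n, f i.succ (z.2 i)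
            ∂((gaussianReal 0 1).prod (Measure.pi fun _ : Fin n => gaussianReal 0 1)) := by
          rw [← key]
          refine lintegral_congr fun x => ?_
          simp [MeasurableEquiv.piFinSuccAbove, Fin.zero_succAbove, Fin.tail]
      _ = (∫⁻ x, f 0 x ∂(gaussianReal 0 1)) * ∫⁻ y, ∏ i : Fin n, f i.succ (y i)
            ∂(Measure.pi fun _ : Fin n => gaussianReal 0 1) := by
          exact lintegral_prod_mul (hf 0).aemeasurable
            (Finset.measurable_prod (f := fun (i : Fin n) (y : Fin n → ℝ) => f i.succ (y i))
              Finset.univ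
              (fun i _ => (hf i.succ).comp (measurable_pi_apply i))).aemeasurable
      _ = ∏ i, ∫⁻ x, f i x ∂(gaussianReal 0 1) := by
          rw [ih _ (fun i => hf i.succ), Fin.prod_univ_succ]

lemma gauss_sq_moment {c : ℝ} (hc : c < 1/2) :
    ∫⁻ x, ENNReal.ofReal (Real.exp (c * x^2)) ∂(gaussianReal 0 1)
      = ENNReal.ofReal ((Real.sqrt (1 - 2*c))⁻¹) := by
  have hb : 0 < 1/2 - c := by linarith
  have hm : Measurable fun x : ℝ => ENNReal.ofReal (Real.exp (c * x^2)) := by fun_prop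
  rw [gaussianReal_of_var_ne_zero 0 one_ne_zero,
    lintegral_withDensity_eq_lintegral_mul _ (measurable_gaussianPDF 0 1) hm]
  have h1 : ∀ x : ℝ, (gaussianPDF 0 1 x) * ENNReal.ofReal (Real.exp (c * x^2))
      = ENNReal.ofReal ((Real.sqrt (2*π))⁻¹ * Real.exp (-(1/2 - c) * x^2)) := by
    intro x
    rw [gaussianPDF, ← ENNReal.ofReal_mul (gaussianPDFReal_nonneg 0 1 x)]
    congr 1
    rw [gaussianPDFReal]
    simp only [NNReal.coe_one, mul_one, sub_zero]
    rw [mul_assoc, ← Real.exp_add]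
    congr 1
    ring
  simp only [Pi.mul_apply, h1]
  rw [← ofReal_integral_eq_lintegral_ofReal]
  · rw [integral_const_mul, integral_gaussian]
    congr 1
    rw [inv_mul_eq_div, ← Real.sqrt_div (by positivity : (0:ℝ) ≤ π/(1/2-c)),
      ← Real.sqrt_inv]
    congr 1
    rw [div_div, inv_eq_one_div, div_eq_div_iff (by positivity) (by linarith)]
    ring
  · exact (integrable_exp_neg_mul_sq hb).const_mul _
  · exact ae_of_all _ fun x => by positivity

lemma card_fin_filter_lt (d k : ℕ) (h : k ≤ d) :
    (Finset.univ.filter (fun i : Fin d => (i:ℕ) < k)).card = k := by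
  conv_rhs => rw [← Fintype.card_fin_lt_of_le h]
  rw [Fintype.card_subtype]

/-- Dasgupta–Gupta lower tail bound: for `V` with i.i.d. standard Gaussian entries and
`L = (V₁² + ⋯ + V_k²)/(V₁² + ⋯ + V_d²)`, for any `0 < β < 1`,
`Pr[L ≤ βk/d] ≤ β^{k/2} (1 + (1-β)k/(d-k))^{(d-k)/2} ≤ exp((k/2)(1 - β + ln β))`. -/
theorem stmt4 (d k : ℕ) (hk : 0 < k) (hkd : k < d)
    (β : ℝ) (hβ0 : 0 < β) (hβ1 : β < 1) :
    (Measure.pi fun _ : Fin d => gaussianReal 0 1)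
        {v : Fin d → ℝ |
          (∑ i : Fin d, if (i : ℕ) < k then v i ^ 2 else 0) / (∑ i : Fin d, v i ^ 2)
            ≤ β * k / d}
      ≤ ENNReal.ofReal
          (β ^ ((k : ℝ) / 2) * (1 + (1 - β) * k / ((d : ℝ) - k)) ^ (((d : ℝ) - k) / 2))
    ∧ β ^ ((k : ℝ) / 2) * (1 + (1 - β) * k / ((d : ℝ) - k)) ^ (((d : ℝ) - k) / 2)
        ≤ Real.exp (((k : ℝ) / 2) * (1 - β + Real.log β)) := by
  have hkd' : (k:ℝ) < d := by exact_mod_cast hkd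
  have hkr : (0:ℝ) < k := by exact_mod_cast hk
  have hdr : (0:ℝ) < d := by exact_mod_cast hk.trans hkd
  have hdk : (0:ℝ) < (d:ℝ) - k := by linarith
  have hdβk : 0 < (d:ℝ) - β*k := by nlinarith
  constructor
  · -- probability bound
    set t : ℝ := (1-β)/(2*β*((d:ℝ)-β*k)) with ht
    have htpos : 0 < t := div_pos (by linarith) (by positivity)
    set c : Fin d → ℝ := fun i => if (i:ℕ) < k then t*(β*k-(d:ℝ)) else t*(β*k) with hcdef
    have hval1 : 1 - 2*(t*(β*k-(d:ℝ))) = β⁻¹ := by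
      rw [ht]; field_simp; ring
    have hval2 : 1 - 2*(t*(β*k)) = ((d:ℝ)-k)/((d:ℝ)-β*k) := by
      rw [ht]; field_simp; ring
    have hclt : ∀ i : Fin d, c i < 1/2 := by
      intro i
      have : 0 < 1 - 2 * c i := by
        rw [hcdef]; dsimp only
        split_ifs
        · rw [hval1]; positivity
        · rw [hval2]; positivity
      linarith
    set g : Fin d → ℝ → ℝ≥0∞ := fun i x => ENNReal.ofReal (Real.exp (c i * x^2)) with hgdef
    have hg : ∀ i, Measurable (g i) := fun i => by rw [hgdef]; fun_prop
    have hsub : {v : Fin d → ℝ |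
          (∑ i : Fin d, if (i : ℕ) < k then v i ^ 2 else 0) / (∑ i : Fin d, v i ^ 2)
            ≤ β * k / d} ⊆ {v : Fin d → ℝ | 1 ≤ ∏ i, g i (v i)} := by
      intro v hv
      simp only [Set.mem_setOf_eq] at hv ⊢
      set Sk := ∑ i : Fin d, if (i:ℕ) < k then v i^2 else 0 with hSk
      set Sd := ∑ i : Fin d, v i^2 with hSd
      have hSk0 : 0 ≤ Sk := Finset.sum_nonneg fun i _ => by split_ifs <;> positivity
      have hSd0 : 0 ≤ Sd := Finset.sum_nonneg fun i _ => by positivity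
      have hkSd : Sk ≤ Sd := Finset.sum_le_sum fun i _ => by
        split_ifs
        · exact le_rfl
        · positivity
      have hmain : (d:ℝ) * Sk ≤ β*k*Sd := by
        rcases eq_or_lt_of_le hSd0 with h0 | hpos
        · have hSkz : Sk = 0 := le_antisymm (h0 ▸ hkSd) hSk0
          rw [hSkz, ← h0]; simp
        · have h2 := (div_le_div_iff₀ hpos hdr).mp hv
          nlinarith [h2]
      have hsum : 0 ≤ ∑ i : Fin d, c i * (v i)^2 := by
        have he : ∑ i : Fin d, c i * (v i)^2
            = t*(β*k*Sd) - t*((d:ℝ)*Sk) := by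
          rw [hSd, hSk, Finset.mul_sum, Finset.mul_sum, Finset.mul_sum, Finset.mul_sum,
            ← Finset.sum_sub_distrib]
          refine Finset.sum_congr rfl fun i _ => ?_
          rw [hcdef]; dsimp only
          split_ifs <;> ring
        rw [he]
        have : t*((d:ℝ)*Sk) ≤ t*(β*k*Sd) := by
          apply mul_le_mul_of_nonneg_left _ htpos.le
          linarith
        linarith
      rw [hgdef]
      dsimp only
      rw [← ENNReal.ofReal_prod_of_nonneg (fun i _ => (Real.exp_pos _).le), ← Real.exp_sum]
      exact ENNReal.one_le_ofReal.mpr (Real.one_le_exp hsum)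
    have hmeas : AEMeasurable (fun v : Fin d → ℝ => ∏ i, g i (v i))
        (Measure.pi fun _ : Fin d => gaussianReal 0 1) :=
      (Finset.measurable_prod (f := fun (i : Fin d) (v : Fin d → ℝ) => g i (v i))
        Finset.univ (fun i _ => (hg i).comp (measurable_pi_apply i))).aemeasurable
    calc (Measure.pi fun _ : Fin d => gaussianReal 0 1) _
        ≤ (Measure.pi fun _ : Fin d => gaussianReal 0 1)
            {v : Fin d → ℝ | 1 ≤ ∏ i, g i (v i)} := measure_mono hsub
      _ ≤ ∫⁻ v, ∏ i, g i (v i) ∂(Measure.pi fun _ : Fin d => gaussianReal 0 1) :=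
          meas_le_lintegral₀ hmeas (fun x hx => hx)
      _ = ∏ i, ∫⁻ x, g i x ∂(gaussianReal 0 1) := lintegral_pi_prod d g hg
      _ = ∏ i : Fin d, ENNReal.ofReal ((Real.sqrt (1 - 2 * c i))⁻¹) := by
          exact Finset.prod_congr rfl fun i _ => gauss_sq_moment (hclt i)
      _ = ENNReal.ofReal (∏ i : Fin d, (Real.sqrt (1 - 2 * c i))⁻¹) :=
          (ENNReal.ofReal_prod_of_nonneg (fun i _ => by positivity)).symm
      _ ≤ ENNReal.ofReal
          (β ^ ((k : ℝ) / 2) * (1 + (1 - β) * k / ((d : ℝ) - k)) ^ (((d : ℝ) - k) / 2)) := by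
          apply le_of_eq
          congr 1
          have hstep : ∀ i : Fin d, (Real.sqrt (1 - 2 * c i))⁻¹
              = if (i:ℕ) < k then Real.sqrt β
                else Real.sqrt (((d:ℝ)-β*k)/((d:ℝ)-k)) := by
            intro i
            rw [hcdef]; dsimp only
            split_ifs
            · rw [hval1, Real.sqrt_inv, inv_inv]
            · rw [hval2, ← Real.sqrt_inv, inv_div]
          simp_rw [hstep]
          rw [Finset.prod_ite, Finset.prod_const, Finset.prod_const,
            card_fin_filter_lt d k hkd.le]
          have hcard2 : (Finset.univ.filter (fun i : Fin d => ¬ (i:ℕ) < k)).card = d - k := by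
            have h := Finset.card_filter_add_card_filter_not
              (s := (Finset.univ : Finset (Fin d))) (p := fun i : Fin d => (i:ℕ) < k)
            rw [card_fin_filter_lt d k hkd.le, Finset.card_univ, Fintype.card_fin] at h
            omega
          rw [hcard2]
          have hr : (1:ℝ) + (1 - β) * k / ((d : ℝ) - k) = ((d:ℝ)-β*k)/((d:ℝ)-k) := by
            field_simp; ring
          rw [hr]
          have hcast : ((d - k : ℕ) : ℝ) = (d:ℝ) - k := by
            rw [Nat.cast_sub hkd.le]
          have e1 : (Real.sqrt β) ^ k = β ^ ((k:ℝ)/2) := by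
            rw [Real.sqrt_eq_rpow, ← Real.rpow_natCast (β ^ ((1:ℝ)/2)) k,
              ← Real.rpow_mul hβ0.le]
            congr 1; ring
          have e2 : (Real.sqrt (((d:ℝ)-β*k)/((d:ℝ)-k))) ^ (d - k)
              = (((d:ℝ)-β*k)/((d:ℝ)-k)) ^ (((d:ℝ)-k)/2) := by
            rw [Real.sqrt_eq_rpow, ← Real.rpow_natCast ((((d:ℝ)-β*k)/((d:ℝ)-k)) ^ ((1:ℝ)/2)) (d-k),
              ← Real.rpow_mul (by positivity), hcast]
            congr 1; ring
          rw [e1, e2]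
  · -- analytic bound
    set x : ℝ := (1 - β) * k / ((d : ℝ) - k) with hxdef
    have hx : 0 ≤ x := div_nonneg (mul_nonneg (by linarith) (Nat.cast_nonneg k)) hdk.le
    have h1 : (1 + x) ^ (((d:ℝ) - k)/2) ≤ Real.exp (x * (((d:ℝ) - k)/2)) := by
      rw [Real.exp_mul]
      exact Real.rpow_le_rpow (by positivity) (by linarith [Real.add_one_le_exp x]) (by positivity)
    have h2 : x * (((d:ℝ) - k)/2) = (1 - β) * k / 2 := by
      rw [hxdef]; field_simp
    calc β ^ ((k : ℝ) / 2) * (1 + x) ^ (((d : ℝ) - k) / 2)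
        ≤ β ^ ((k : ℝ) / 2) * Real.exp ((1 - β) * k / 2) := by
          rw [← h2]
          exact mul_le_mul_of_nonneg_left h1 (Real.rpow_nonneg hβ0.le _)
      _ = Real.exp (((k : ℝ) / 2) * (1 - β + Real.log β)) := by
          rw [Real.rpow_def_of_pos hβ0, ← Real.exp_add]
          congr 1
          ring
end

section
/- Let d, k, n be positive integers with k < d and n ≥ 2, let c > 0 be a real number, and set β = n^{−2c/k}/e, which satisfies β < 1. Let V = (V₁, …, V_d) have i.i.d. standard Gaussian N(0,1) entries and let L = (V₁² + ⋯ + V_k²)/(V₁² + ⋯ + V_d²). Then Pr[L ≤ βk/d] ≤ n^{−c}. -/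
/-!
Chernoff's method. For `s ≥ 0`, on the event `L ≤ a := βk/d` the quadratic form
`∑ tᵢ Vᵢ² = s (a ‖V‖² - (V₁² + ⋯ + V_k²))` is nonnegative, so by Markov's inequality for its
exponential and `E[exp (t X²)] = (1 - 2t)^{-1/2}` (`t < 1/2`) the probability is at most
`∏ (1 - 2tᵢ)^{-1/2}`. The choice `s = (β⁻¹ - 1) / (2 (1 - a))` turns these factors into `√β` for
the first `k` coordinates and `√G`, `G = 1 + (1 - β)k/(d - k)`, for the others. Finally
`G^{d-k} ≤ e^{(1-β)k} ≤ e^k`, and `β^k e^k = n^{-2c}` by the choice of `β`.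
-/

open MeasureTheory ProbabilityTheory Real Finset

lemma gaussianPDFReal_mul_exp_mul_sq (t x : ℝ) :
    gaussianPDFReal 0 1 x * exp (t * x ^ 2) = (√(2 * π))⁻¹ * exp (-(1 / 2 - t) * x ^ 2) := by
  rw [gaussianPDFReal, mul_assoc, ← exp_add]
  congr 2
  · simp
  · rw [NNReal.coe_one]
    ring

section GaussianSquare

variable {t : ℝ}

lemma integrable_exp_mul_sq_gaussianReal (ht : t < 1 / 2) :
    Integrable (fun x => exp (t * x ^ 2)) (gaussianReal 0 1) := by
  rw [gaussianReal_of_var_ne_zero 0 one_ne_zero, integrable_withDensity_iff_integrable_smul'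
    (measurable_gaussianPDF 0 1) (ae_of_all _ fun _ ↦ gaussianPDF_lt_top)]
  simp_rw [gaussianPDF, ENNReal.toReal_ofReal (gaussianPDFReal_nonneg 0 1 _), smul_eq_mul,
    gaussianPDFReal_mul_exp_mul_sq]
  exact (integrable_exp_neg_mul_sq (by linarith)).const_mul _

lemma integral_exp_mul_sq_gaussianReal (ht : t < 1 / 2) :
    ∫ x, exp (t * x ^ 2) ∂gaussianReal 0 1 = (√(1 - 2 * t))⁻¹ := by
  simp_rw [integral_gaussianReal_eq_integral_smul one_ne_zero, smul_eq_mul,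
    gaussianPDFReal_mul_exp_mul_sq, integral_const_mul, integral_gaussian]
  rw [← sqrt_inv, ← sqrt_inv, ← sqrt_mul (by positivity)]
  have : 1 / 2 - t ≠ 0 := by linarith
  congr 1
  field_simp

end GaussianSquare

section GaussianVector

variable {ι : Type*} [Fintype ι] {t : ι → ℝ}

lemma integrable_exp_sum_mul_sq_pi_gaussianReal (ht : ∀ i, t i < 1 / 2) :
    Integrable (fun v : ι → ℝ => exp (∑ i, t i * v i ^ 2))
      (Measure.pi fun _ => gaussianReal 0 1) := by
  simp_rw [exp_sum]
  exact Integrable.fintype_prod fun i => integrable_exp_mul_sq_gaussianReal (ht i)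

lemma integral_exp_sum_mul_sq_pi_gaussianReal (ht : ∀ i, t i < 1 / 2) :
    ∫ v : ι → ℝ, exp (∑ i, t i * v i ^ 2) ∂(Measure.pi fun _ => gaussianReal 0 1) =
      ∏ i, (√(1 - 2 * t i))⁻¹ := by
  simp_rw [exp_sum]
  rw [integral_fintype_prod_eq_prod (fun i x => exp (t i * x ^ 2))]
  exact prod_congr rfl fun i _ => integral_exp_mul_sq_gaussianReal (ht i)

lemma pi_gaussianReal_sum_mul_sq_nonneg_le (ht : ∀ i, t i < 1 / 2) :
    (Measure.pi fun _ => gaussianReal 0 1) {v : ι → ℝ | 0 ≤ ∑ i, t i * v i ^ 2} ≤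
      ENNReal.ofReal (∏ i, (√(1 - 2 * t i))⁻¹) := by
  set μ := Measure.pi fun _ : ι => gaussianReal 0 1
  have hmarkov := mul_meas_ge_le_integral_of_nonneg (μ := μ)
    (ae_of_all _ fun v => (exp_pos (∑ i, t i * v i ^ 2)).le)
    (integrable_exp_sum_mul_sq_pi_gaussianReal ht) 1
  simp only [one_mul, one_le_exp_iff] at hmarkov
  rw [← ENNReal.ofReal_toReal (measure_ne_top μ _), ENNReal.ofReal_le_ofReal_iff (by positivity),
    ← integral_exp_sum_mul_sq_pi_gaussianReal ht]
  exact hmarkov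

end GaussianVector

/-- The paper's `L = ‖P_k (V / ‖V‖)‖²`, written without normalizing `V`. -/
noncomputable def prefixSqNormRatio {d : ℕ} (k : ℕ) (v : Fin d → ℝ) : ℝ :=
  (∑ i : Fin d, if (i : ℕ) < k then v i ^ 2 else 0) / ∑ i, v i ^ 2

lemma sum_mul_sq_nonneg_of_prefixSqNormRatio_le {d k : ℕ} {v : Fin d → ℝ} {s a : ℝ}
    (hs : 0 ≤ s) (hv : prefixSqNormRatio k v ≤ a) :
    0 ≤ ∑ i : Fin d, s * (a - if (i : ℕ) < k then 1 else 0) * v i ^ 2 := by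
  set f := ∑ i : Fin d, if (i : ℕ) < k then v i ^ 2 else 0
  set g := ∑ i, v i ^ 2
  have hsum :
      ∑ i : Fin d, s * (a - if (i : ℕ) < k then 1 else 0) * v i ^ 2 = s * (a * g - f) := by
    rw [mul_sub, mul_sum, mul_sum, mul_sum, ← sum_sub_distrib]
    refine sum_congr rfl fun i _ => ?_
    split_ifs <;> ring
  have hf : 0 ≤ f := sum_nonneg fun i _ => by positivity
  have hfg : f ≤ g := sum_le_sum fun i _ => by split_ifs; exacts [le_rfl, sq_nonneg _]
  have hfag : f ≤ a * g := by
    have hg : 0 ≤ g := sum_nonneg fun i _ => sq_nonneg (v i)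
    rcases hg.eq_or_lt with hg | hg
    · rw [← hg] at hfg ⊢
      linarith
    · rwa [prefixSqNormRatio, div_le_iff₀ hg] at hv
  rw [hsum]
  exact mul_nonneg hs (by linarith)

lemma prod_ite_val_lt {M : Type*} [CommMonoid M] {d k : ℕ} (hkd : k ≤ d) (x y : M) :
    ∏ i : Fin d, (if (i : ℕ) < k then x else y) = x ^ k * y ^ (d - k) := by
  rw [prod_ite, prod_const, prod_const, Fin.card_filter_val_lt, min_eq_right hkd,
    filter_not, card_sdiff_of_subset (filter_subset _ _), card_univ, Fintype.card_fin,
    Fin.card_filter_val_lt, min_eq_right hkd]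

theorem pi_gaussianReal_prefixSqNormRatio_le {d k : ℕ} (hkd : k < d) {β : ℝ} (hβ0 : 0 < β)
    (hβ1 : β ≤ 1) :
    (Measure.pi fun _ : Fin d => gaussianReal 0 1) {v | prefixSqNormRatio k v ≤ β * k / d} ≤
      ENNReal.ofReal (√(β ^ k * (1 + (1 - β) * k / (d - k)) ^ (d - k))) := by
  have hkd' : (k : ℝ) < d := by exact_mod_cast hkd
  have hd : (d : ℝ) ≠ 0 := (by linarith : (0 : ℝ) < d).ne'
  have hdk : (0 : ℝ) < d - k := by linarith
  have hdβk : (0 : ℝ) < d - β * k := by nlinarith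
  set a := β * k / d
  set G := 1 + (1 - β) * k / (d - k)
  have h1a : 1 - a = (d - β * k) / d := by
    simp only [a]
    field_simp
  have hG : G = (d - β * k) / (d - k) := by
    simp only [G]
    field_simp
    ring
  set s := (β⁻¹ - 1) / (2 * (1 - a))
  have hs : 0 ≤ s := by
    have : 1 ≤ β⁻¹ := one_le_inv_iff₀.2 ⟨hβ0, hβ1⟩
    exact div_nonneg (by linarith) (by rw [h1a]; positivity)
  set t : Fin d → ℝ := fun i => s * (a - if (i : ℕ) < k then 1 else 0)
  have hcoef : ∀ i, 1 - 2 * t i = (if (i : ℕ) < k then β else G)⁻¹ := by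
    intro i
    split_ifs with hi <;> simp only [t, s, h1a, hG, a, hi, if_true, if_false] <;>
      field_simp <;> ring
  have ht : ∀ i, t i < 1 / 2 := by
    intro i
    have : 0 < 1 - 2 * t i := by rw [hcoef, hG]; split_ifs <;> positivity
    linarith
  calc (Measure.pi fun _ : Fin d => gaussianReal 0 1) {v | prefixSqNormRatio k v ≤ a}
      ≤ (Measure.pi fun _ : Fin d => gaussianReal 0 1) {v | 0 ≤ ∑ i, t i * v i ^ 2} :=
        measure_mono fun v hv => sum_mul_sq_nonneg_of_prefixSqNormRatio_le hs hv
    _ ≤ ENNReal.ofReal (∏ i, (√(1 - 2 * t i))⁻¹) := pi_gaussianReal_sum_mul_sq_nonneg_le ht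
    _ = ENNReal.ofReal (√(β ^ k * G ^ (d - k))) := by
        simp_rw [hcoef, sqrt_inv, inv_inv]
        rw [← sqrt_prod _ fun i _ => by rw [hG]; split_ifs <;> positivity, prod_ite_val_lt hkd.le]

lemma one_add_mul_div_sub_pow_le_exp_one_pow {d k : ℕ} (hkd : k < d) {β : ℝ} (hβ0 : 0 ≤ β)
    (hβ1 : β ≤ 1) :
    (1 + (1 - β) * k / (d - k)) ^ (d - k) ≤ exp 1 ^ k := by
  have hdk : ((d - k : ℕ) : ℝ) = d - k := Nat.cast_sub hkd.le
  calc (1 + (1 - β) * k / (d - k)) ^ (d - k)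
      = (1 - -((1 - β) * k) / ((d - k : ℕ) : ℝ)) ^ (d - k) := by rw [hdk, neg_div, sub_neg_eq_add]
    _ ≤ exp (-(-((1 - β) * k))) := one_sub_div_pow_le_exp_neg (by rw [hdk]; nlinarith)
    _ ≤ exp 1 ^ k := by
        rw [neg_neg, ← exp_nat_mul, mul_one]
        exact exp_le_exp.2 (by nlinarith [(Nat.cast_nonneg k : (0 : ℝ) ≤ k)])

/-- Paper's Lemma 3.8: with `β = n^{-2c/k}/e < 1`, for `V` with i.i.d. standard
Gaussian entries and `L = (V₁² + ⋯ + V_k²)/(V₁² + ⋯ + V_d²)`,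
`Pr[L ≤ βk/d] ≤ n^{-c}`. -/
theorem stmt7 (d k n : ℕ) (hk : 0 < k) (hkd : k < d) (hn : 2 ≤ n)
    (c : ℝ) (hc : 0 < c)
    (β : ℝ) (hβ : β = (n : ℝ) ^ (-(2 * c) / (k : ℝ)) / Real.exp 1) :
    β < 1 ∧
    (Measure.pi fun _ : Fin d => gaussianReal 0 1)
        {v : Fin d → ℝ |
          (∑ i : Fin d, if (i : ℕ) < k then v i ^ 2 else 0) / (∑ i : Fin d, v i ^ 2)
            ≤ β * k / d}
      ≤ ENNReal.ofReal ((n : ℝ) ^ (-c)) := by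
  have hn0 : (0 : ℝ) < n := by positivity
  have hk0 : (k : ℝ) ≠ 0 := by positivity
  have hβ0 : 0 < β := by rw [hβ]; positivity
  have hβ1 : β < 1 := by
    rw [hβ, div_lt_one (exp_pos 1)]
    calc (n : ℝ) ^ (-(2 * c) / k) ≤ 1 :=
          rpow_le_one_of_one_le_of_nonpos (by exact_mod_cast one_le_two.trans hn)
            (div_nonpos_of_nonpos_of_nonneg (by linarith) (Nat.cast_nonneg k))
      _ < exp 1 := one_lt_exp_iff.2 one_pos
  have hβk : β ^ k * exp 1 ^ k = ((n : ℝ) ^ (-c)) ^ 2 := by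
    rw [← mul_pow, hβ, div_mul_cancel₀ _ (exp_pos 1).ne', ← rpow_natCast, ← rpow_mul hn0.le,
      ← rpow_natCast ((n : ℝ) ^ (-c)), ← rpow_mul hn0.le]
    congr 1
    field_simp
    ring
  refine ⟨hβ1, (pi_gaussianReal_prefixSqNormRatio_le hkd hβ0 hβ1.le).trans
    (ENNReal.ofReal_le_ofReal ?_)⟩
  rw [← sqrt_sq (rpow_pos_of_pos hn0 (-c)).le, ← hβk]
  exact sqrt_le_sqrt (mul_le_mul_of_nonneg_left
    (one_add_mul_div_sub_pow_le_exp_one_pow hkd hβ0.le hβ1.le) (by positivity))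
end

section
/- Let a, b ≥ 1 be integers and let G be the unweighted complete bipartite graph with left side of size a and right side of size b (every left vertex adjacent to every right vertex with edge weight 1), with Laplacian matrix L (diagonal of degrees minus adjacency matrix). Let u be a left vertex and v a right vertex, and let χ_u, χ_v denote the corresponding standard basis vectors. Then for every vector φ satisfying L·φ = χ_u − χ_v, one has φ_u − φ_v = (a + b − 1)/(a·b); in particular, the effective resistance of every edge of G equals (a + b − 1)/(a·b), the same value for all edges. -/
open Matrix

/-- Effective resistance of an edge of the unweighted complete bipartite graph
`K_{a,b}`: if `Lap` is its Laplacian and `φ` satisfies `Lap φ = χ_u - χ_v` for a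
left vertex `u` and a right vertex `v`, then `φ_u - φ_v = (a + b - 1)/(a b)`;
in particular every edge has the same effective resistance `(a + b - 1)/(a b)`. -/
theorem stmt16 (a b : ℕ) (ha : 1 ≤ a) (hb : 1 ≤ b)
    (Lap : Matrix (Fin a ⊕ Fin b) (Fin a ⊕ Fin b) ℝ)
    (hLap : ∀ w w' : Fin a ⊕ Fin b, Lap w w' =
      match w, w' with
      | Sum.inl i, Sum.inl i' => if i = i' then (b : ℝ) else 0
      | Sum.inl _, Sum.inr _ => -1
      | Sum.inr _, Sum.inl _ => -1
      | Sum.inr j, Sum.inr j' => if j = j' then (a : ℝ) else 0)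
    (u : Fin a) (v : Fin b) (φ : Fin a ⊕ Fin b → ℝ)
    (hφ : Lap.mulVec φ = Pi.single (Sum.inl u) 1 - Pi.single (Sum.inr v) 1) :
    φ (Sum.inl u) - φ (Sum.inr v) = ((a : ℝ) + b - 1) / ((a : ℝ) * b) := by
  set S := ∑ i, φ (Sum.inl i) with hS
  set T := ∑ j, φ (Sum.inr j) with hT
  have hL : ∀ i : Fin a, (b : ℝ) * φ (Sum.inl i) - T = if i = u then 1 else 0 := by
    intro i
    have := congrFun hφ (Sum.inl i)
    simp only [mulVec, dotProduct, Fintype.sum_sum_type, hLap, Pi.sub_apply] at this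
    simp only [ite_mul, zero_mul, Finset.sum_ite_eq, Finset.mem_univ, if_true,
      neg_one_mul, Finset.sum_neg_distrib] at this
    rw [show ((Pi.single (Sum.inl u) 1 : Fin a ⊕ Fin b → ℝ) (Sum.inl i)) = if i = u then 1 else 0 by
          rcases eq_or_ne i u with h | h <;> simp [h, Pi.single_apply],
        show ((Pi.single (Sum.inr v) 1 : Fin a ⊕ Fin b → ℝ) (Sum.inl i)) = 0 by simp] at this
    rw [← hT] at this
    linarith [this]
  have hR : ∀ j : Fin b, (a : ℝ) * φ (Sum.inr j) - S = if j = v then -1 else 0 := by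
    intro j
    have := congrFun hφ (Sum.inr j)
    simp only [mulVec, dotProduct, Fintype.sum_sum_type, hLap, Pi.sub_apply] at this
    simp only [ite_mul, zero_mul, Finset.sum_ite_eq, Finset.mem_univ, if_true,
      neg_one_mul, Finset.sum_neg_distrib] at this
    rw [show ((Pi.single (Sum.inr v) 1 : Fin a ⊕ Fin b → ℝ) (Sum.inr j)) = if j = v then 1 else 0 by
          rcases eq_or_ne j v with h | h <;> simp [h, Pi.single_apply],
        show ((Pi.single (Sum.inl u) 1 : Fin a ⊕ Fin b → ℝ) (Sum.inr j)) = 0 by simp] at this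
    rw [← hS] at this
    rcases eq_or_ne j v with h | h <;> simp [h] at this ⊢ <;> linarith [this]
  have hsum : (b : ℝ) * S - (a : ℝ) * T = 1 := by
    have h1 : ∑ i : Fin a, ((b:ℝ) * φ (Sum.inl i) - T)
        = ∑ i : Fin a, (if i = u then (1:ℝ) else 0) :=
      Finset.sum_congr rfl (fun i _ => hL i)
    simp only [Finset.sum_ite_eq, Finset.sum_ite_eq', Finset.mem_univ, if_true, Finset.sum_sub_distrib,
      ← Finset.mul_sum, Finset.sum_const, Finset.card_univ, Fintype.card_fin,
      nsmul_eq_mul] at h1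
    rw [← hS] at h1
    linarith [h1]
  have hu := hL u
  have hv := hR v
  norm_num at hu hv
  have ha' : (a : ℝ) ≠ 0 := by positivity
  have hb' : (b : ℝ) ≠ 0 := by positivity
  field_simp
  linear_combination (a:ℝ) * hu - (b:ℝ) * hv - hsum
end
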